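/- arXiv:math/0410348 — 5 statements merged into one kernel-verified Lean document; each statement's English description precedes it below -/
import Mathlib

section
/- Let H be a separable infinite-dimensional complex Hilbert space and let {f_j : j ∈ ℕ} ⊂ H be a tight frame for H with frame bound A > 0, i.e., for all f ∈ H, ∑_{j∈ℕ} |⟨f, f_j⟩|² = A‖f‖². Then there exists a separable complex Hilbert space H' containing H as a closed subspace and an orthogonal basis {e_j : j ∈ ℕ} of H' (an orthogonal family with dense span, all elements of equal norm √A) such that P(e_j) = f_j for every j ∈ ℕ, where P : H' → H is the orthogonal projection onto H. -/
/-!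
The analysis operator `x ↦ (⟪f j, x⟫)ⱼ` of a tight frame with bound `A` is `√A` times an
isometry `ι : H → ℓ²(ℕ)`. Take `H' = ℓ²(ℕ)` and `e j = √A • δⱼ`: then
`⟪e j, ι x⟫ = √A · (ι x) j = ⟪f j, x⟫ = ⟪ι (f j), ι x⟫`, so `e j - ι (f j) ⟂ ι(H)`.
-/

open scoped ComplexInnerProductSpace InnerProductSpace lp

theorem HilbertBasis.separableSpace {ι 𝕜 E : Type*} [Countable ι] [RCLike 𝕜]
    [NormedAddCommGroup E] [InnerProductSpace 𝕜 E] (b : HilbertBasis ι 𝕜 E) :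
    TopologicalSpace.SeparableSpace E := by
  have hspan : TopologicalSpace.IsSeparable (Submodule.span 𝕜 (Set.range b) : Set E) :=
    (Set.countable_range b).isSeparable.span
  rw [← TopologicalSpace.isSeparable_univ_iff, ← Submodule.top_coe (R := 𝕜),
    ← b.dense_span, Submodule.topologicalClosure_coe]
  exact hspan.closure

theorem HilbertBasis.dense_span_smul {ι 𝕜 E : Type*} [RCLike 𝕜]
    [NormedAddCommGroup E] [InnerProductSpace 𝕜 E] (b : HilbertBasis ι 𝕜 E) {c : 𝕜} (hc : c ≠ 0) :
    (Submodule.span 𝕜 (Set.range (c • ⇑b))).topologicalClosure = ⊤ := by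
  rw [Pi.smul_def, Set.range_smul, Submodule.span_smul_eq_of_isUnit _ _ hc.isUnit, b.dense_span]

theorem lp.inner_default_hilbertBasis {ι 𝕜 : Type*} [RCLike 𝕜] (v : ℓ²(ι, 𝕜)) (j : ι) :
    ⟪(default : HilbertBasis ι 𝕜 ℓ²(ι, 𝕜)) j, v⟫_𝕜 = v j :=
  ((default : HilbertBasis ι 𝕜 ℓ²(ι, 𝕜)).repr_apply_apply v j).symm

section TightFrame

variable {ι 𝕜 E : Type*} [RCLike 𝕜] [NormedAddCommGroup E] [InnerProductSpace 𝕜 E]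
  {A : ℝ} {f : ι → E}

theorem memℓp_inner_of_tight (hA : 0 < A) (hf : ∀ x, ∑' j, ‖⟪x, f j⟫_𝕜‖ ^ 2 = A * ‖x‖ ^ 2)
    (x : E) : Memℓp (fun j => ⟪f j, x⟫_𝕜) 2 := by
  refine memℓp_gen ?_
  simp only [norm_inner_symm (f _) x, ENNReal.toReal_ofNat, Real.rpow_ofNat]
  rcases eq_or_ne x 0 with rfl | hx
  · simp
  by_contra hns
  have : 0 < A * ‖x‖ ^ 2 := by positivity
  rw [← hf x, tsum_eq_zero_of_not_summable hns] at this
  exact this.false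

noncomputable def analysisOperator (hf : ∀ x, Memℓp (fun j => ⟪f j, x⟫_𝕜) 2) :
    E →ₗ[𝕜] ℓ²(ι, 𝕜) where
  toFun x := ⟨fun j => ⟪f j, x⟫_𝕜, hf x⟩
  map_add' x y := by ext j; exact inner_add_right _ _ _
  map_smul' c x := by ext j; exact inner_smul_right _ _ _

@[simp]
theorem analysisOperator_apply (hf : ∀ x, Memℓp (fun j => ⟪f j, x⟫_𝕜) 2) (x : E) (j : ι) :
    analysisOperator hf x j = ⟪f j, x⟫_𝕜 :=
  rfl

theorem norm_analysisOperator_sq (hf : ∀ x, Memℓp (fun j => ⟪f j, x⟫_𝕜) 2) (x : E) :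
    ‖analysisOperator hf x‖ ^ 2 = ∑' j, ‖⟪x, f j⟫_𝕜‖ ^ 2 := by
  have h := lp.norm_rpow_eq_tsum (p := 2) (by norm_num) (analysisOperator hf x)
  simp only [ENNReal.toReal_ofNat, Real.rpow_ofNat, analysisOperator_apply] at h
  simp only [h, norm_inner_symm]

theorem norm_analysisOperator_of_tight (hA : 0 < A)
    (hf : ∀ x, ∑' j, ‖⟪x, f j⟫_𝕜‖ ^ 2 = A * ‖x‖ ^ 2) (x : E) :
    ‖analysisOperator (memℓp_inner_of_tight hA hf) x‖ = √A * ‖x‖ :=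
  (sq_eq_sq₀ (norm_nonneg _) (by positivity)).1 <| by
    rw [norm_analysisOperator_sq, hf, mul_pow, Real.sq_sqrt hA.le]

noncomputable def tightFrameIsometry (hA : 0 < A)
    (hf : ∀ x, ∑' j, ‖⟪x, f j⟫_𝕜‖ ^ 2 = A * ‖x‖ ^ 2) :
    E →ₗᵢ[𝕜] ℓ²(ι, 𝕜) where
  toLinearMap := ((√A)⁻¹ : 𝕜) • analysisOperator (memℓp_inner_of_tight hA hf)
  norm_map' x := by
    rw [LinearMap.smul_apply, norm_smul, norm_analysisOperator_of_tight hA hf, norm_inv,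
      RCLike.norm_ofReal, abs_of_nonneg (Real.sqrt_nonneg A), inv_mul_cancel_left₀]
    exact (Real.sqrt_pos.2 hA).ne'

theorem inner_sqrt_smul_tightFrameIsometry (hA : 0 < A)
    (hf : ∀ x, ∑' j, ‖⟪x, f j⟫_𝕜‖ ^ 2 = A * ‖x‖ ^ 2) (j : ι) (x : E) :
    ⟪(√A : 𝕜) • (default : HilbertBasis ι 𝕜 ℓ²(ι, 𝕜)) j, tightFrameIsometry hA hf x⟫_𝕜 =
      ⟪f j, x⟫_𝕜 := by
  have hc : (√A : 𝕜) ≠ 0 := RCLike.ofReal_ne_zero.2 (Real.sqrt_pos.2 hA).ne'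
  rw [inner_smul_left, lp.inner_default_hilbertBasis, RCLike.conj_ofReal]
  exact mul_inv_cancel_left₀ hc _

end TightFrame

theorem tight_frame_is_projection_of_orthogonal_basis_general
    {H : Type} [NormedAddCommGroup H] [InnerProductSpace ℂ H]
    (A : ℝ) (hA : 0 < A) (f : ℕ → H)
    (hf : ∀ x : H, ∑' j : ℕ, ‖(⟪x, f j⟫ : ℂ)‖ ^ 2 = A * ‖x‖ ^ 2) :
    ∃ (H' : Type) (_ : NormedAddCommGroup H') (_ : InnerProductSpace ℂ H')
      (_ : CompleteSpace H') (_ : TopologicalSpace.SeparableSpace H')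
      (ι : H →ₗᵢ[ℂ] H') (e : ℕ → H'),
      (∀ i j : ℕ, i ≠ j → (⟪e i, e j⟫ : ℂ) = 0) ∧
      (∀ j : ℕ, ‖e j‖ ^ 2 = A) ∧
      (Submodule.span ℂ (Set.range e)).topologicalClosure = ⊤ ∧
      (∀ (j : ℕ) (h : H), (⟪e j - ι (f j), ι h⟫ : ℂ) = 0) := by
  let b : HilbertBasis ℕ ℂ ℓ²(ℕ, ℂ) := default
  have hc : (√A : ℂ) ≠ 0 := Complex.ofReal_ne_zero.2 (Real.sqrt_pos.2 hA).ne'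
  refine ⟨ℓ²(ℕ, ℂ), inferInstance, inferInstance, inferInstance, b.separableSpace,
    tightFrameIsometry hA hf, (√A : ℂ) • ⇑b, ?_, ?_, b.dense_span_smul hc, ?_⟩
  · intro i j hij
    simp only [Pi.smul_apply, inner_smul_left, inner_smul_right, b.orthonormal.2 hij, mul_zero]
  · intro j
    rw [Pi.smul_apply, norm_smul, b.orthonormal.1 j, mul_one, Complex.norm_real,
      Real.norm_of_nonneg (Real.sqrt_nonneg A), Real.sq_sqrt hA.le]
  · intro j h
    rw [inner_sub_left, Pi.smul_apply, LinearIsometry.inner_map_map]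
    exact sub_eq_zero.2 (inner_sqrt_smul_tightFrameIsometry hA hf j h)

/-- **Naimark's theorem (tight frame direction).** Every tight frame with frame bound `A > 0`
in a separable infinite-dimensional complex Hilbert space `H` is the orthogonal projection of
an orthogonal basis (an orthogonal family of equal norm `√A` with dense span) of an ambient
separable Hilbert space `H'` containing `H` as a closed subspace. The containment is realized
by a linear isometry `ι : H →ₗᵢ[ℂ] H'` (whose range is automatically closed since `H` is
complete), and the condition `P (e j) = f j` for the orthogonal projection `P` onto `ι(H)` is
expressed by the defining property `e j - ι (f j) ⟂ ι(H)`. -/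
theorem tight_frame_is_projection_of_orthogonal_basis
    {H : Type} [NormedAddCommGroup H] [InnerProductSpace ℂ H] [CompleteSpace H]
    [TopologicalSpace.SeparableSpace H] (hinf : ¬ FiniteDimensional ℂ H)
    (A : ℝ) (hA : 0 < A) (f : ℕ → H)
    (hf : ∀ x : H, ∑' j : ℕ, ‖(⟪x, f j⟫ : ℂ)‖ ^ 2 = A * ‖x‖ ^ 2) :
    ∃ (H' : Type) (_ : NormedAddCommGroup H') (_ : InnerProductSpace ℂ H')
      (_ : CompleteSpace H') (_ : TopologicalSpace.SeparableSpace H')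
      (ι : H →ₗᵢ[ℂ] H') (e : ℕ → H'),
      (∀ i j : ℕ, i ≠ j → (⟪e i, e j⟫ : ℂ) = 0) ∧
      (∀ j : ℕ, ‖e j‖ ^ 2 = A) ∧
      (Submodule.span ℂ (Set.range e)).topologicalClosure = ⊤ ∧
      (∀ (j : ℕ) (h : H), (⟪e j - ι (f j), ι h⟫ : ℂ) = 0) :=
  tight_frame_is_projection_of_orthogonal_basis_general A hA f hf
end

section
/- Let H be a separable infinite-dimensional complex Hilbert space and let {f_j : j ∈ ℕ} ⊂ H be a frame for H with frame bounds 0 < A ≤ B. Then there exists a separable complex Hilbert space H' containing H as a closed subspace and a Riesz basis {e_j : j ∈ ℕ} of H' with the same constants A and B (i.e., {e_j} is complete in H' and A‖c‖₂² ≤ ‖∑_{j∈ℕ} c(j) e_j‖² ≤ B‖c‖₂² for all c ∈ ℓ²(ℕ)) such that P(e_j) = f_j for every j ∈ ℕ, where P : H' → H is the orthogonal projection onto H. -/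
/-!
Let `T : H → ℓ²` be the analysis operator `x ↦ (⟪f j, x⟫)ⱼ`. Then `T† δⱼ = f j`, and the frame
bounds read `A‖x‖² ≤ ‖T x‖² ≤ B‖x‖²`, so `T` is injective with closed range `M`. Put
`H' = H ⊕ Mᗮ` and `eⱼ = S δⱼ` for the dilation `S c = (T† c, √A • P_{Mᗮ} c)`. Splitting
`c = T x + q` with `q ∈ Mᗮ = ker T†` gives `‖S c‖² = ‖T† T x‖² + A‖q‖²`, and
`A‖T x‖² ≤ ‖T† T x‖² ≤ B‖T x‖²` yields the Riesz bounds. Completeness of `(eⱼ)` is injectivity of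
`S† (x, w) = T x + √A • w`, which holds because `M ⊥ Mᗮ`. Finally the `H`-component of `eⱼ` is
`T† δⱼ = f j`, i.e. `f j` is the orthogonal projection of `eⱼ` onto `H`.
-/

open scoped ComplexInnerProductSpace

section

open scoped InnerProductSpace InnerProduct
open Submodule Set

variable {𝕜 ι E F K : Type*} [RCLike 𝕜]

theorem lp.norm_sq_eq_tsum {G : ι → Type*} [∀ i, NormedAddCommGroup (G i)] (c : lp G 2) :
    ‖c‖ ^ 2 = ∑' i, ‖c i‖ ^ 2 := by
  simpa [Real.rpow_two] using lp.norm_rpow_eq_tsum (p := 2) (by norm_num) c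

theorem lp.hasSum_apply_single [DecidableEq ι] [NormedAddCommGroup F] [NormedSpace 𝕜 F]
    (S : lp (fun _ : ι => 𝕜) 2 →L[𝕜] F) (c : lp (fun _ : ι => 𝕜) 2) :
    HasSum (fun j => c j • S (lp.single 2 j 1)) (S c) := by
  refine ((lp.hasSum_single (by norm_num) c).mapL S).congr_fun fun j => ?_
  rw [← map_smul, ← lp.single_smul, smul_eq_mul, mul_one]

theorem lp.topologicalClosure_span_range_apply_single_eq_top [DecidableEq ι]
    [NormedAddCommGroup F] [InnerProductSpace 𝕜 F] [CompleteSpace F]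
    (S : lp (fun _ : ι => 𝕜) 2 →L[𝕜] F) (hS : Function.Injective (S†)) :
    (span 𝕜 (range fun j => S (lp.single 2 j 1))).topologicalClosure = ⊤ := by
  rw [topologicalClosure_eq_top_iff, eq_bot_iff]
  intro v hv
  have hSv : (S†) v = 0 := by
    ext j
    have := (mem_orthogonal _ v).1 hv _ (subset_span (mem_range_self j))
    rw [← ContinuousLinearMap.adjoint_inner_right, lp.inner_single_left] at this
    simpa using this
  exact hS (hSv.trans (map_zero _).symm)

theorem separableSpace_of_topologicalClosure_span_eq_top [Countable ι] [NormedAddCommGroup F]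
    [NormedSpace 𝕜 F] (e : ι → F) (he : (span 𝕜 (range e)).topologicalClosure = ⊤) :
    TopologicalSpace.SeparableSpace F := by
  rw [← TopologicalSpace.isSeparable_univ_iff, ← Submodule.top_coe (R := 𝕜), ← he,
    topologicalClosure_coe]
  exact (countable_range e).isSeparable.span.closure

namespace WithLp

variable (𝕜 E F) [NormedAddCommGroup E] [InnerProductSpace 𝕜 E]
  [NormedAddCommGroup F] [InnerProductSpace 𝕜 F]

noncomputable def inlₗᵢ : E →ₗᵢ[𝕜] WithLp 2 (E × F) where
  toLinearMap := (WithLp.linearEquiv 2 𝕜 (E × F)).symm.toLinearMap ∘ₗ LinearMap.inl 𝕜 E F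
  norm_map' := norm_toLp_fst 2 E F

variable {𝕜 E F}

@[simp]
theorem inlₗᵢ_apply (x : E) : inlₗᵢ 𝕜 E F x = toLp 2 (x, 0) := rfl

end WithLp

section AnalysisOperator

variable [NormedAddCommGroup E] [InnerProductSpace 𝕜 E]

noncomputable def analysisOp (f : ι → E) (B : ℝ)
    (hsum : ∀ x, Summable fun j => ‖⟪x, f j⟫_𝕜‖ ^ 2)
    (hB : ∀ x, ∑' j, ‖⟪x, f j⟫_𝕜‖ ^ 2 ≤ B * ‖x‖ ^ 2) : E →L[𝕜] lp (fun _ : ι => 𝕜) 2 :=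
  LinearMap.mkContinuous
    { toFun x := ⟨fun j => ⟪f j, x⟫_𝕜, memℓp_gen <| by simpa [norm_inner_symm] using hsum x⟩
      map_add' x y := by ext j; simp [inner_add_right]; rfl
      map_smul' c x := by ext j; simp [inner_smul_right] }
    √B fun x => calc
      _ ≤ √(B * ‖x‖ ^ 2) := Real.le_sqrt_of_sq_le <| by
        simpa [lp.norm_sq_eq_tsum, norm_inner_symm] using hB x
      _ = √B * ‖x‖ := by rw [Real.sqrt_mul' _ (sq_nonneg ‖x‖), Real.sqrt_sq (norm_nonneg x)]

variable (f : ι → E) (B : ℝ) (hsum : ∀ x, Summable fun j => ‖⟪x, f j⟫_𝕜‖ ^ 2)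
  (hB : ∀ x, ∑' j, ‖⟪x, f j⟫_𝕜‖ ^ 2 ≤ B * ‖x‖ ^ 2)

@[simp]
theorem analysisOp_apply (x : E) (j : ι) : analysisOp f B hsum hB x j = ⟪f j, x⟫_𝕜 := rfl

theorem norm_analysisOp_apply_sq (x : E) :
    ‖analysisOp f B hsum hB x‖ ^ 2 = ∑' j, ‖⟪x, f j⟫_𝕜‖ ^ 2 := by
  simp [lp.norm_sq_eq_tsum, norm_inner_symm]

theorem norm_analysisOp_sq_le (hB₀ : 0 ≤ B) : ‖analysisOp f B hsum hB‖ ^ 2 ≤ B :=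
  calc ‖analysisOp f B hsum hB‖ ^ 2 ≤ √B ^ 2 :=
        pow_le_pow_left₀ (norm_nonneg _) (LinearMap.mkContinuous_norm_le _ (Real.sqrt_nonneg B) _) 2
    _ = B := Real.sq_sqrt hB₀

theorem adjoint_analysisOp_single [CompleteSpace E] [DecidableEq ι] (j : ι) :
    ((analysisOp f B hsum hB)†) (lp.single 2 j 1) = f j :=
  ext_inner_right 𝕜 fun x => by
    rw [ContinuousLinearMap.adjoint_inner_left, lp.inner_single_left]
    simp

end AnalysisOperator

namespace ContinuousLinearMap

variable [NormedAddCommGroup E] [InnerProductSpace 𝕜 E] [NormedAddCommGroup K]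
  [InnerProductSpace 𝕜 K] (T : E →L[𝕜] K) {A B : ℝ}

theorem exists_antilipschitzWith_of_mul_norm_sq_le (hA : 0 < A)
    (hT : ∀ x, A * ‖x‖ ^ 2 ≤ ‖T x‖ ^ 2) : ∃ C, AntilipschitzWith C T := by
  refine ⟨⟨(√A)⁻¹, by positivity⟩, T.antilipschitz_of_bound fun x => ?_⟩
  change ‖x‖ ≤ (√A)⁻¹ * ‖T x‖
  rw [inv_mul_eq_div, le_div_iff₀ (Real.sqrt_pos.2 hA)]
  calc ‖x‖ * √A = √(A * ‖x‖ ^ 2) := by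
        rw [Real.sqrt_mul' _ (sq_nonneg _), Real.sqrt_sq (norm_nonneg x), mul_comm]
    _ ≤ ‖T x‖ := (Real.sqrt_le_sqrt (hT x)).trans_eq (Real.sqrt_sq (norm_nonneg _))

variable [CompleteSpace E] [CompleteSpace K]

theorem mul_norm_sq_le_norm_adjoint_apply_sq (hA : 0 ≤ A) (hT : ∀ x, A * ‖x‖ ^ 2 ≤ ‖T x‖ ^ 2)
    (x : E) : A * ‖T x‖ ^ 2 ≤ ‖(T†) (T x)‖ ^ 2 := by
  have h : ‖T x‖ ^ 2 ≤ ‖(T†) (T x)‖ * ‖x‖ := by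
    rw [apply_norm_sq_eq_inner_adjoint_left]
    exact (RCLike.re_le_norm _).trans (norm_inner_le_norm _ _)
  rcases (norm_nonneg (T x)).eq_or_lt with h0 | hpos
  · simp [← h0]
  refine le_of_mul_le_mul_right ?_ (pow_pos hpos 2)
  calc A * ‖T x‖ ^ 2 * ‖T x‖ ^ 2 = A * (‖T x‖ ^ 2) ^ 2 := by ring
    _ ≤ A * (‖(T†) (T x)‖ * ‖x‖) ^ 2 := by gcongr
    _ = ‖(T†) (T x)‖ ^ 2 * (A * ‖x‖ ^ 2) := by ring
    _ ≤ ‖(T†) (T x)‖ ^ 2 * ‖T x‖ ^ 2 := by gcongr; exact hT x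

theorem norm_adjoint_apply_sq_le (hTB : ‖T‖ ^ 2 ≤ B) (y : K) : ‖(T†) y‖ ^ 2 ≤ B * ‖y‖ ^ 2 :=
  calc ‖(T†) y‖ ^ 2 ≤ (‖T‖ * ‖y‖) ^ 2 := by
        gcongr
        simpa using (T†).le_opNorm y
    _ ≤ B * ‖y‖ ^ 2 := by rw [mul_pow]; gcongr

noncomputable def naimarkDilation (A : ℝ) : K →L[𝕜] WithLp 2 (E × T.rangeᗮ) :=
  (WithLp.prodContinuousLinearEquiv 2 𝕜 E _).symm.toContinuousLinearMap ∘L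
    (T†).prod ((√A : 𝕜) • T.rangeᗮ.orthogonalProjectionOnto)

@[simp]
theorem naimarkDilation_fst (c : K) : (T.naimarkDilation A c).fst = (T†) c := rfl

@[simp]
theorem naimarkDilation_snd (c : K) :
    (T.naimarkDilation A c).snd = (√A : 𝕜) • T.rangeᗮ.orthogonalProjectionOnto c :=
  rfl

theorem norm_naimarkDilation_sq (hA : 0 ≤ A) (c : K) :
    ‖T.naimarkDilation A c‖ ^ 2 =
      ‖(T†) c‖ ^ 2 + A * ‖T.rangeᗮ.orthogonalProjectionOnto c‖ ^ 2 := by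
  rw [WithLp.prod_norm_sq_eq_of_L2, naimarkDilation_fst, naimarkDilation_snd, norm_smul, mul_pow,
    RCLike.norm_ofReal, abs_of_nonneg (Real.sqrt_nonneg A), Real.sq_sqrt hA]

theorem adjoint_naimarkDilation_apply (v : WithLp 2 (E × T.rangeᗮ)) :
    ((T.naimarkDilation A)†) v = T v.fst + (√A : 𝕜) • (v.snd : K) :=
  ext_inner_left 𝕜 fun c => by
    simp [adjoint_inner_right, adjoint_inner_left, inner_add_right, inner_smul_right,
      inner_smul_left]

theorem injective_adjoint_naimarkDilation (hA : 0 < A) (hT : Function.Injective T) :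
    Function.Injective ((T.naimarkDilation A)†) := by
  refine (injective_iff_map_eq_zero _).2 fun v hv => ?_
  rw [adjoint_naimarkDilation_apply, add_eq_zero_iff_eq_neg] at hv
  have hTv : T v.fst = 0 := by
    have h : T v.fst ∈ T.range ⊓ T.rangeᗮ :=
      ⟨⟨v.fst, rfl⟩, hv ▸ neg_mem (smul_mem _ _ v.snd.2)⟩
    rwa [inf_orthogonal_eq_bot, mem_bot] at h
  have hfst : v.fst = 0 := hT (hTv.trans (map_zero T).symm)
  have hsnd : v.snd = 0 := by
    rw [hTv, zero_eq_neg, smul_eq_zero] at hv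
    exact Subtype.ext (hv.resolve_left (RCLike.ofReal_ne_zero.2 (Real.sqrt_pos.2 hA).ne'))
  exact (WithLp.ofLp_eq_zero 2).1 (Prod.ext hfst hsnd)

section ClosedRange

variable [T.range.HasOrthogonalProjection]

theorem adjoint_orthogonalProjectionOnto_range (c : K) :
    (T†) (T.range.orthogonalProjectionOnto c) = (T†) c := by
  have hker : (T†) (T.rangeᗮ.orthogonalProjectionOnto c) = 0 :=
    LinearMap.mem_ker.1 (T.orthogonal_range ▸ (T.rangeᗮ.orthogonalProjectionOnto c).2)
  conv_rhs => rw [← T.range.starProjection_add_starProjection_orthogonal c]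
  rw [map_add]
  exact (add_eq_left.2 hker).symm

theorem mul_norm_sq_le_norm_naimarkDilation_sq (hA : 0 ≤ A) (hT : ∀ x, A * ‖x‖ ^ 2 ≤ ‖T x‖ ^ 2)
    (c : K) : A * ‖c‖ ^ 2 ≤ ‖T.naimarkDilation A c‖ ^ 2 := by
  obtain ⟨x, hx⟩ := (T.range.orthogonalProjectionOnto c).2
  rw [coe_coe] at hx
  have hm := T.mul_norm_sq_le_norm_adjoint_apply_sq hA hT x
  have hnorm : ‖T.range.orthogonalProjectionOnto c‖ = ‖T x‖ := by rw [hx]; rfl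
  rw [norm_naimarkDilation_sq T hA, norm_sq_eq_add_norm_sq_projection c T.range,
    ← adjoint_orthogonalProjectionOnto_range, ← hx, hnorm]
  linarith

theorem norm_naimarkDilation_sq_le (hA : 0 ≤ A) (hAB : A ≤ B) (hTB : ‖T‖ ^ 2 ≤ B) (c : K) :
    ‖T.naimarkDilation A c‖ ^ 2 ≤ B * ‖c‖ ^ 2 := by
  have hm := T.norm_adjoint_apply_sq_le hTB (T.range.orthogonalProjectionOnto c)
  have hq : A * ‖T.rangeᗮ.orthogonalProjectionOnto c‖ ^ 2 ≤
      B * ‖T.rangeᗮ.orthogonalProjectionOnto c‖ ^ 2 := by gcongr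
  rw [norm_naimarkDilation_sq T hA, norm_sq_eq_add_norm_sq_projection c T.range,
    ← adjoint_orthogonalProjectionOnto_range]
  norm_cast at hm
  linarith

end ClosedRange

end ContinuousLinearMap

end

theorem frame_is_projection_of_riesz_basis_general
    {H : Type} [NormedAddCommGroup H] [InnerProductSpace ℂ H] [CompleteSpace H]
    (A B : ℝ) (hA : 0 < A) (hAB : A ≤ B) (f : ℕ → H)
    (hframe : ∀ x : H,
      A * ‖x‖ ^ 2 ≤ ∑' j : ℕ, ‖(⟪x, f j⟫ : ℂ)‖ ^ 2 ∧
      ∑' j : ℕ, ‖(⟪x, f j⟫ : ℂ)‖ ^ 2 ≤ B * ‖x‖ ^ 2) :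
    ∃ (H' : Type) (_ : NormedAddCommGroup H') (_ : InnerProductSpace ℂ H')
      (_ : CompleteSpace H') (_ : TopologicalSpace.SeparableSpace H')
      (ι : H →ₗᵢ[ℂ] H') (e : ℕ → H'),
      (Submodule.span ℂ (Set.range e)).topologicalClosure = ⊤ ∧
      (∀ c : lp (fun _ : ℕ => ℂ) 2, Summable (fun j : ℕ => c j • e j)) ∧
      (∀ c : lp (fun _ : ℕ => ℂ) 2,
        A * ‖c‖ ^ 2 ≤ ‖∑' j : ℕ, c j • e j‖ ^ 2 ∧
        ‖∑' j : ℕ, c j • e j‖ ^ 2 ≤ B * ‖c‖ ^ 2) ∧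
      (∀ (j : ℕ) (h : H), (⟪e j - ι (f j), ι h⟫ : ℂ) = 0) := by
  -- A divergent series has `∑' = 0`, which the lower frame bound rules out for `x ≠ 0`.
  have hsum : ∀ x : H, Summable fun j => ‖⟪x, f j⟫‖ ^ 2 := by
    intro x
    rcases eq_or_ne x 0 with rfl | hx
    · simp
    by_contra hs
    have hlower := (hframe x).1
    rw [tsum_eq_zero_of_not_summable hs] at hlower
    have : 0 < A * ‖x‖ ^ 2 := by positivity
    linarith
  set T := analysisOp f B hsum fun x => (hframe x).2
  have hT : ∀ x, A * ‖x‖ ^ 2 ≤ ‖T x‖ ^ 2 := fun x => by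
    rw [norm_analysisOp_apply_sq]; exact (hframe x).1
  obtain ⟨C, hC⟩ := T.exists_antilipschitzWith_of_mul_norm_sq_le hA hT
  have hclosed : IsClosed (T.range : Set (lp (fun _ : ℕ => ℂ) 2)) := by
    rw [LinearMap.coe_range, ContinuousLinearMap.coe_coe]
    exact hC.isClosed_range T.uniformContinuous
  have := hclosed.completeSpace_coe
  set S := T.naimarkDilation A
  have hS := lp.hasSum_apply_single S
  have hspan := lp.topologicalClosure_span_range_apply_single_eq_top S
    (T.injective_adjoint_naimarkDilation hA hC.injective)
  refine ⟨_, inferInstance, inferInstance, inferInstance,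
    separableSpace_of_topologicalClosure_span_eq_top (𝕜 := ℂ) _ hspan, WithLp.inlₗᵢ ℂ H _,
    _, hspan, fun c => (hS c).summable, fun c => ?_, fun j x => ?_⟩
  · rw [(hS c).tsum_eq]
    exact ⟨T.mul_norm_sq_le_norm_naimarkDilation_sq hA.le hT c,
      T.norm_naimarkDilation_sq_le hA.le hAB (norm_analysisOp_sq_le _ _ _ _ (hA.le.trans hAB)) c⟩
  · simp [S, T, adjoint_analysisOp_single]

/-- **Naimark's theorem for frames (Casazza–Han–Larson, Kashin–Kulikova).** Every frame
`{f j}` with frame bounds `0 < A ≤ B` in a separable infinite-dimensional complex Hilbert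
space `H` is the orthogonal projection of a Riesz basis `{e j}` with the same constants
`A ≤ B` of an ambient separable Hilbert space `H'` containing `H` as a closed subspace
(realized by a linear isometry `ι`). A Riesz basis with constants `A ≤ B` is a complete
system satisfying `A‖c‖² ≤ ‖∑ c j • e j‖² ≤ B‖c‖²` for all `c ∈ ℓ²(ℕ)`. -/
theorem frame_is_projection_of_riesz_basis
    {H : Type} [NormedAddCommGroup H] [InnerProductSpace ℂ H] [CompleteSpace H]
    [TopologicalSpace.SeparableSpace H] (hinf : ¬ FiniteDimensional ℂ H)
    (A B : ℝ) (hA : 0 < A) (hAB : A ≤ B) (f : ℕ → H)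
    (hframe : ∀ x : H,
      A * ‖x‖ ^ 2 ≤ ∑' j : ℕ, ‖(⟪x, f j⟫ : ℂ)‖ ^ 2 ∧
      ∑' j : ℕ, ‖(⟪x, f j⟫ : ℂ)‖ ^ 2 ≤ B * ‖x‖ ^ 2) :
    ∃ (H' : Type) (_ : NormedAddCommGroup H') (_ : InnerProductSpace ℂ H')
      (_ : CompleteSpace H') (_ : TopologicalSpace.SeparableSpace H')
      (ι : H →ₗᵢ[ℂ] H') (e : ℕ → H'),
      (Submodule.span ℂ (Set.range e)).topologicalClosure = ⊤ ∧
      (∀ c : lp (fun _ : ℕ => ℂ) 2, Summable (fun j : ℕ => c j • e j)) ∧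
      (∀ c : lp (fun _ : ℕ => ℂ) 2,
        A * ‖c‖ ^ 2 ≤ ‖∑' j : ℕ, c j • e j‖ ^ 2 ∧
        ‖∑' j : ℕ, c j • e j‖ ^ 2 ≤ B * ‖c‖ ^ 2) ∧
      (∀ (j : ℕ) (h : H), (⟪e j - ι (f j), ι h⟫ : ℂ) = 0) :=
  frame_is_projection_of_riesz_basis_general A B hA hAB f hframe
end

section
/- Let H be a separable infinite-dimensional complex Hilbert space and let {f_j : j ∈ ℕ} ⊂ H be a Bessel system for H (i.e., ∑_{j∈ℕ} |⟨f, f_j⟩|² ≤ B‖f‖² for all f ∈ H, for some B > 0) that is complete in H. Then there exists a separable complex Hilbert space H' containing H as a closed subspace and a system {e_j : j ∈ ℕ} ⊂ H' that is complete in H' and ω-linearly independent for ℓ²(ℕ), such that P(e_j) = f_j for every j ∈ ℕ, where P : H' → H is the orthogonal projection onto H. -/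
/-!
Embed `E` into `E ⊕ K`, where `K ⊆ ℓ²` is the orthogonal complement of the analysis sequences
`(⟪f j, x⟫)_j`, and put `e j = (f j, P_K δ_j)`. If `v ⟂ e j` for all `j`, then
`v.snd j = -⟪f j, v.fst⟫`, so `-v.snd` is an analysis sequence lying in `K`, hence `v.snd = 0`,
and completeness of `f` gives `v.fst = 0`. If `∑ c j • e j = 0`, the first components say
`∑ c j • f j = 0`, which makes `c` orthogonal to every analysis sequence, i.e. `c ∈ K`; the second
components then say `c = P_K c = 0`.
-/

def WithLp.prodInlₗᵢ (p : ENNReal) [Fact (1 ≤ p)] (𝕜 E F : Type*) [NormedField 𝕜]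
    [SeminormedAddCommGroup E] [NormedSpace 𝕜 E] [SeminormedAddCommGroup F] [NormedSpace 𝕜 F] :
    E →ₗᵢ[𝕜] WithLp p (E × F) where
  toFun x := WithLp.toLp p (x, 0)
  map_add' x y := by simp [← WithLp.toLp_add]
  map_smul' c x := by simp [← WithLp.toLp_smul]
  norm_map' := WithLp.norm_toLp_fst p E F

noncomputable section

open Submodule Set

variable {𝕜 ι E : Type*} [RCLike 𝕜] [NormedAddCommGroup E] [InnerProductSpace 𝕜 E]

theorem mem_orthogonal_span_range_iff {g : ι → E} {v : E} :
    v ∈ (span 𝕜 (range g))ᗮ ↔ ∀ j, inner 𝕜 (g j) v = 0 := by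
  rw [← span_singleton_le_iff_mem, ← isOrtho_iff_le, isOrtho_comm, isOrtho_span]
  simp

theorem separableSpace_of_topologicalClosure_span_eq_top_s5 [Countable ι] {g : ι → E}
    (hg : (span 𝕜 (range g)).topologicalClosure = ⊤) : TopologicalSpace.SeparableSpace E := by
  rw [← TopologicalSpace.isSeparable_univ_iff, ← Submodule.top_coe (R := 𝕜), ← hg,
    Submodule.topologicalClosure_coe]
  exact (countable_range g).isSeparable.span.closure

variable (𝕜) in
def OmegaLinearIndependent {F : Type*} [AddCommGroup F] [Module 𝕜 F] [TopologicalSpace F]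
    (e : ι → F) : Prop :=
  ∀ c : lp (fun _ : ι => 𝕜) 2, HasSum (fun j => c j • e j) 0 → c = 0

-- The range of the analysis operator `x ↦ (⟪f j, x⟫)_j`, which need not be defined on all of `E`.
variable (𝕜) in
def analysisSubmodule (f : ι → E) : Submodule 𝕜 (lp (fun _ : ι => 𝕜) 2) where
  carrier := {u | ∃ x, ∀ j, u j = inner 𝕜 (f j) x}
  add_mem' := by
    rintro u v ⟨x, hx⟩ ⟨y, hy⟩
    exact ⟨x + y, fun j => by simp [hx, hy, inner_add_right]⟩
  zero_mem' := ⟨0, by simp⟩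
  smul_mem' := by
    rintro c u ⟨x, hx⟩
    exact ⟨c • x, fun j => by simp [hx, inner_smul_right]⟩

theorem mem_orthogonal_analysisSubmodule_of_hasSum {f : ι → E} {c : lp (fun _ : ι => 𝕜) 2}
    (hc : HasSum (fun j => c j • f j) 0) : c ∈ (analysisSubmodule 𝕜 f)ᗮ := by
  rintro u ⟨x, hx⟩
  refine (lp.hasSum_inner u c).unique ?_
  simpa [hx, inner_smul_right, mul_comm] using hc.mapL (innerSL 𝕜 x)

section Projection
variable [DecidableEq ι] (K : Submodule 𝕜 (lp (fun _ : ι => 𝕜) 2)) [K.HasOrthogonalProjection]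

theorem inner_orthogonalProjectionOnto_single_one (j : ι) {y : lp (fun _ : ι => 𝕜) 2}
    (hy : y ∈ K) :
    inner 𝕜 (K.orthogonalProjectionOnto (lp.single 2 j 1) : lp (fun _ : ι => 𝕜) 2) y = y j := by
  rw [← starProjection_apply, inner_starProjection_left_eq_right,
    starProjection_eq_self_iff.mpr hy, lp.inner_single_left]
  simp

theorem hasSum_smul_orthogonalProjectionOnto_single_one (c : lp (fun _ : ι => 𝕜) 2) :
    HasSum (fun j => c j • K.orthogonalProjectionOnto (lp.single 2 j 1))
      (K.orthogonalProjectionOnto c) := by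
  have hc := (lp.hasSum_single (by norm_num) c).mapL K.orthogonalProjectionOnto
  convert hc using 2 with j
  rw [← map_smul, ← lp.single_smul, smul_eq_mul, mul_one]

end Projection

instance (f : ι → E) : (analysisSubmodule 𝕜 f)ᗮ.HasOrthogonalProjection := .ofCompleteSpace _

variable (𝕜) in
def dilation [DecidableEq ι] (f : ι → E) : ι → WithLp 2 (E × (analysisSubmodule 𝕜 f)ᗮ) :=
  fun j =>
    WithLp.toLp 2 (f j, (analysisSubmodule 𝕜 f)ᗮ.orthogonalProjectionOnto (lp.single 2 j 1))

variable [DecidableEq ι] {f : ι → E}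

@[simp]
theorem dilation_fst (j : ι) : (dilation 𝕜 f j).fst = f j := rfl

@[simp]
theorem dilation_snd (j : ι) :
    (dilation 𝕜 f j).snd = (analysisSubmodule 𝕜 f)ᗮ.orthogonalProjectionOnto (lp.single 2 j 1) :=
  rfl

theorem inner_dilation (j : ι) (v : WithLp 2 (E × (analysisSubmodule 𝕜 f)ᗮ)) :
    inner 𝕜 (dilation 𝕜 f j) v = inner 𝕜 (f j) v.fst + (v.snd : lp (fun _ : ι => 𝕜) 2) j := by
  rw [WithLp.prod_inner_apply, ← inner_orthogonalProjectionOnto_single_one _ j v.snd.2]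
  rfl

theorem dilation_topologicalClosure_span_eq_top [CompleteSpace E]
    (hf : (span 𝕜 (range f)).topologicalClosure = ⊤) :
    (span 𝕜 (range (dilation 𝕜 f))).topologicalClosure = ⊤ := by
  rw [topologicalClosure_eq_top_iff] at hf ⊢
  rw [eq_bot_iff]
  intro v hv
  have hv' := mem_orthogonal_span_range_iff.mp hv
  simp only [inner_dilation] at hv'
  have hsnd : (v.snd : lp (fun _ : ι => 𝕜) 2) = 0 := by
    have hmem : -(v.snd : lp (fun _ : ι => 𝕜) 2) ∈ analysisSubmodule 𝕜 f :=
      ⟨v.fst, fun j => by simp [eq_neg_of_add_eq_zero_right (hv' j)]⟩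
    simpa using inner_left_of_mem_orthogonal hmem v.snd.2
  have hfst : v.fst = 0 := by
    rw [← mem_bot 𝕜, ← hf, mem_orthogonal_span_range_iff]
    simpa [hsnd] using hv'
  exact (mem_bot 𝕜).mpr (WithLp.ofLp_injective 2 (Prod.ext hfst (Subtype.ext hsnd)))

theorem omegaLinearIndependent_dilation : OmegaLinearIndependent 𝕜 (dilation 𝕜 f) := by
  intro c hc
  have hfst : HasSum (fun j => c j • f j) 0 := by
    simpa using hc.mapL ((ContinuousLinearMap.fst 𝕜 E _).comp
      (WithLp.prodContinuousLinearEquiv 2 𝕜 E (analysisSubmodule 𝕜 f)ᗮ).toContinuousLinearMap)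
  have hsnd : HasSum (fun j => c j •
      (analysisSubmodule 𝕜 f)ᗮ.orthogonalProjectionOnto (lp.single 2 j 1)) 0 := by
    simpa using hc.mapL ((ContinuousLinearMap.snd 𝕜 E _).comp
      (WithLp.prodContinuousLinearEquiv 2 𝕜 E (analysisSubmodule 𝕜 f)ᗮ).toContinuousLinearMap)
  rw [← starProjection_eq_self_iff.mpr (mem_orthogonal_analysisSubmodule_of_hasSum hfst),
    starProjection_apply, (hasSum_smul_orthogonalProjectionOnto_single_one _ c).unique hsnd,
    ZeroMemClass.coe_zero]

theorem inner_dilation_sub_prodInlₗᵢ (j : ι) (x : E) :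
    inner 𝕜 (dilation 𝕜 f j - WithLp.prodInlₗᵢ 2 𝕜 E _ (f j)) (WithLp.prodInlₗᵢ 2 𝕜 E _ x) = 0 := by
  simp [WithLp.prod_inner_apply, WithLp.prodInlₗᵢ, dilation]

end

open scoped ComplexInnerProductSpace

theorem complete_bessel_is_projection_of_omega_independent_general
    {H : Type} [NormedAddCommGroup H] [InnerProductSpace ℂ H] [CompleteSpace H]
    (f : ℕ → H)
    (hcomplete : (Submodule.span ℂ (Set.range f)).topologicalClosure = ⊤) :
    ∃ (H' : Type) (_ : NormedAddCommGroup H') (_ : InnerProductSpace ℂ H')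
      (_ : CompleteSpace H') (_ : TopologicalSpace.SeparableSpace H')
      (ι : H →ₗᵢ[ℂ] H') (e : ℕ → H'),
      (Submodule.span ℂ (Set.range e)).topologicalClosure = ⊤ ∧
      (∀ c : lp (fun _ : ℕ => ℂ) 2,
        HasSum (fun j : ℕ => c j • e j) 0 → c = 0) ∧
      (∀ (j : ℕ) (h : H), (⟪e j - ι (f j), ι h⟫ : ℂ) = 0) := by
  have hdense := dilation_topologicalClosure_span_eq_top hcomplete
  exact ⟨_, inferInstance, inferInstance, inferInstance,
    separableSpace_of_topologicalClosure_span_eq_top_s5 hdense, WithLp.prodInlₗᵢ 2 ℂ H _,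
    dilation ℂ f, hdense, omegaLinearIndependent_dilation, inner_dilation_sub_prodInlₗᵢ⟩

/-- **Naimark duality for complete Bessel systems (Czaja).** If `{f j}` is a complete Bessel
system (with some constant `B > 0`) in a separable infinite-dimensional complex Hilbert space
`H`, then there is a separable complex Hilbert space `H'` containing `H` as a closed subspace
(realized by a linear isometry `ι`) and a system `{e j} ⊆ H'` that is complete in `H'` and
ω-linearly independent for `ℓ²(ℕ)` (if `c ∈ ℓ²(ℕ)` and `∑ c j • e j` converges to `0`, then
`c = 0`), whose orthogonal projection onto `ι(H)` is `{ι (f j)}`, i.e.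
`e j - ι (f j) ⟂ ι(H)` for all `j`. -/
theorem complete_bessel_is_projection_of_omega_independent
    {H : Type} [NormedAddCommGroup H] [InnerProductSpace ℂ H] [CompleteSpace H]
    [TopologicalSpace.SeparableSpace H] (hinf : ¬ FiniteDimensional ℂ H)
    (B : ℝ) (hB : 0 < B) (f : ℕ → H)
    (hbessel : ∀ x : H, ∑' j : ℕ, ‖(⟪x, f j⟫ : ℂ)‖ ^ 2 ≤ B * ‖x‖ ^ 2)
    (hcomplete : (Submodule.span ℂ (Set.range f)).topologicalClosure = ⊤) :
    ∃ (H' : Type) (_ : NormedAddCommGroup H') (_ : InnerProductSpace ℂ H')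
      (_ : CompleteSpace H') (_ : TopologicalSpace.SeparableSpace H')
      (ι : H →ₗᵢ[ℂ] H') (e : ℕ → H'),
      (Submodule.span ℂ (Set.range e)).topologicalClosure = ⊤ ∧
      (∀ c : lp (fun _ : ℕ => ℂ) 2,
        HasSum (fun j : ℕ => c j • e j) 0 → c = 0) ∧
      (∀ (j : ℕ) (h : H), (⟪e j - ι (f j), ι h⟫ : ℂ) = 0) :=
  complete_bessel_is_projection_of_omega_independent_general f hcomplete
end

section
/- Let {f_j : j ∈ ℕ} ⊂ ℓ²(ℕ) be a Bessel system for ℓ²(ℕ) with constant B > 0, and let {v_i : i ∈ ℕ} ⊂ ℓ²(ℕ) be its transpose system, v_i(j) = f_j(i). Then {f_j : j ∈ ℕ} is complete in ℓ²(ℕ) if and only if {v_i : i ∈ ℕ} is ω-linearly independent for ℓ²(ℕ), i.e., whenever c ∈ ℓ²(ℕ) and ∑_{i∈ℕ} c(i) v_i = 0 in ℓ²(ℕ), then c = 0. -/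
open scoped ComplexInnerProductSpace InnerProductSpace
open Filter Topology

/-!
Write `P F x = ∑ i ∈ F, lp.single 2 i (x i)` for the truncation of `x` to `F`. The `j`-th
coordinate of `∑ i ∈ F, c i • v i` is `⟪P F (star c), f j⟫`. Letting `F` grow, the coordinates
of `∑ c i • v i` are the coefficients `⟪star c, f j⟫`; conversely, once these coefficients form an
`ℓ²` sequence `s`, the Bessel bound gives `‖∑ i ∈ F, c i • v i - s‖ ≤ √B * ‖P F (star c) - star c‖`,
which tends to `0`. Hence `∑ c i • v i = 0` exactly when `star c ⊥ f j` for all `j`, and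
ω-independence of `v` says that `(span (range f))ᗮ = ⊥`.
-/

theorem Submodule.mem_orthogonal_span_range_iff {𝕜 E ι : Type*} [RCLike 𝕜]
    [NormedAddCommGroup E] [InnerProductSpace 𝕜 E] (f : ι → E) (x : E) :
    x ∈ (Submodule.span 𝕜 (Set.range f))ᗮ ↔ ∀ j, ⟪f j, x⟫_𝕜 = 0 := by
  rw [← Submodule.span_singleton_le_iff_mem, ← Submodule.isOrtho_iff_le, Submodule.isOrtho_comm,
    Submodule.isOrtho_span]
  simp

theorem lp.norm_sq_eq_tsum_s11 {𝕜 : Type*} [RCLike 𝕜] (w : lp (fun _ : ℕ => 𝕜) 2) :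
    ‖w‖ ^ 2 = ∑' j, ‖w j‖ ^ 2 := by
  simpa using lp.norm_rpow_eq_tsum (by norm_num : (0 : ℝ) < (2 : ENNReal).toReal) w

/-- The `tsum` in `hbessel` is `0` unless the coefficients are square-summable; membership of
`w` in `ℓ²` is what makes the bound at `y` meaningful. -/
theorem norm_le_sqrt_mul_norm_of_bessel {𝕜 E : Type*} [RCLike 𝕜] [NormedAddCommGroup E]
    [InnerProductSpace 𝕜 E] {B : ℝ} {f : ℕ → E}
    (hbessel : ∀ y : E, ∑' j, ‖⟪y, f j⟫_𝕜‖ ^ 2 ≤ B * ‖y‖ ^ 2)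
    (w : lp (fun _ : ℕ => 𝕜) 2) (y : E) (hw : ∀ j, w j = ⟪y, f j⟫_𝕜) :
    ‖w‖ ≤ √B * ‖y‖ := by
  have hsq : ‖w‖ ^ 2 ≤ B * ‖y‖ ^ 2 := by
    rw [lp.norm_sq_eq_tsum_s11]
    simpa only [hw] using hbessel y
  calc ‖w‖ ≤ √(B * ‖y‖ ^ 2) := Real.le_sqrt_of_sq_le hsq
    _ = √B * ‖y‖ := by rw [Real.sqrt_mul' _ (sq_nonneg _), Real.sqrt_sq (norm_nonneg _)]

local notation "ℓ²" => lp (fun _ : ℕ => ℂ) 2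

section Transpose

variable {f v : ℕ → ℓ²}

theorem sum_smul_transpose_apply (hv : ∀ i j : ℕ, v i j = f j i) (c : ℓ²) (s : Finset ℕ) (j : ℕ) :
    (∑ i ∈ s, c i • v i : ℓ²) j = ⟪∑ i ∈ s, lp.single 2 i ((star c) i), f j⟫ := by
  rw [lp.coeFn_sum, Finset.sum_apply, sum_inner]
  refine Finset.sum_congr rfl fun i _ => ?_
  simp [lp.inner_single_left, lp.star_apply, hv, mul_comm]

theorem hasSum_transpose_iff {B : ℝ}
    (hbessel : ∀ x : ℓ², ∑' j : ℕ, ‖(⟪x, f j⟫ : ℂ)‖ ^ 2 ≤ B * ‖x‖ ^ 2)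
    (hv : ∀ i j : ℕ, v i j = f j i) (c s : ℓ²) :
    HasSum (fun i => c i • v i) s ↔ ∀ j, s j = ⟪star c, f j⟫ := by
  set P : Finset ℕ → ℓ² := fun F => ∑ i ∈ F, lp.single 2 i ((star c) i)
  have hP : Tendsto P atTop (𝓝 (star c)) := lp.hasSum_single (by norm_num) (star c)
  constructor
  · intro hsum j
    have hcoord : Tendsto (fun F => ⟪P F, f j⟫) atTop (𝓝 (s j)) :=
      (((lp.evalCLM ℂ (fun _ : ℕ => ℂ) 2 j).continuous.tendsto s).comp hsum).congr
        fun F => sum_smul_transpose_apply hv c F j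
    exact tendsto_nhds_unique hcoord (hP.inner tendsto_const_nhds)
  · intro hs
    have hbound : ∀ F, ‖(∑ i ∈ F, c i • v i) - s‖ ≤ √B * ‖P F - star c‖ := fun F =>
      norm_le_sqrt_mul_norm_of_bessel hbessel _ _ fun j => by
        rw [lp.coeFn_sub, Pi.sub_apply, sum_smul_transpose_apply hv, hs, inner_sub_left]
    have hP' : Tendsto (fun F => √B * ‖P F - star c‖) atTop (𝓝 0) := by
      simpa using ((tendsto_iff_norm_sub_tendsto_zero.mp hP).const_mul √B)
    exact tendsto_iff_norm_sub_tendsto_zero.mpr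
      (squeeze_zero (fun _ => norm_nonneg _) hbound hP')

end Transpose

theorem complete_iff_transpose_omega_independent_general
    (B : ℝ) (f : ℕ → lp (fun _ : ℕ => ℂ) 2)
    (hbessel : ∀ x : lp (fun _ : ℕ => ℂ) 2,
      ∑' j : ℕ, ‖(⟪x, f j⟫ : ℂ)‖ ^ 2 ≤ B * ‖x‖ ^ 2)
    (v : ℕ → lp (fun _ : ℕ => ℂ) 2) (hv : ∀ i j : ℕ, v i j = f j i) :
    (Submodule.span ℂ (Set.range f)).topologicalClosure = ⊤ ↔
      (∀ c : lp (fun _ : ℕ => ℂ) 2,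
        HasSum (fun i : ℕ => c i • v i) 0 → c = 0) := by
  simp only [Submodule.topologicalClosure_eq_top_iff, Submodule.eq_bot_iff,
    Submodule.mem_orthogonal_span_range_iff, hasSum_transpose_iff hbessel hv, lp.coeFn_zero,
    Pi.zero_apply, eq_comm (a := (0 : ℂ)), inner_eq_zero_symm (x := star _)]
  constructor
  · exact fun h c hc => star_eq_zero.mp (h _ hc)
  · exact fun h x hx => star_eq_zero.mp (h _ (by simpa using hx))

/-- **Duality between completeness and ω-linear independence.** Let `{f j} ⊆ ℓ²(ℕ)` be a
Bessel system with constant `B > 0` and let `{v i} ⊆ ℓ²(ℕ)` be its transpose system,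
`v i (j) = f j (i)`. Then `{f j}` is complete in `ℓ²(ℕ)` if and only if `{v i}` is ω-linearly
independent for `ℓ²(ℕ)`: whenever `c ∈ ℓ²(ℕ)` and `∑ c i • v i` converges in norm to `0`,
then `c = 0`. -/
theorem complete_iff_transpose_omega_independent
    (B : ℝ) (hB : 0 < B) (f : ℕ → lp (fun _ : ℕ => ℂ) 2)
    (hbessel : ∀ x : lp (fun _ : ℕ => ℂ) 2,
      ∑' j : ℕ, ‖(⟪x, f j⟫ : ℂ)‖ ^ 2 ≤ B * ‖x‖ ^ 2)
    (v : ℕ → lp (fun _ : ℕ => ℂ) 2) (hv : ∀ i j : ℕ, v i j = f j i) :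
    (Submodule.span ℂ (Set.range f)).topologicalClosure = ⊤ ↔
      (∀ c : lp (fun _ : ℕ => ℂ) 2,
        HasSum (fun i : ℕ => c i • v i) 0 → c = 0) :=
  complete_iff_transpose_omega_independent_general B f hbessel v hv
end

section
/- Let A > 0 and let {f_j : j ∈ ℕ} ⊂ ℓ²(ℕ) be such that its transpose system {v_i : i ∈ ℕ}, v_i(j) = f_j(i), satisfies: each v_i ∈ ℓ²(ℕ). Suppose L = ℕ ⊔ K is a countable index set, {w_k : k ∈ K} ⊂ ℓ²(ℕ), and the combined family {u_l : l ∈ L} with u_l = v_l for l ∈ ℕ and u_l = w_l for l ∈ K is ω-linearly independent for ℓ²(L) and satisfies the upper Riesz inequality with some constant B > 0. Define e_j ∈ ℓ²(L) by e_j(l) = u_l(j) for j ∈ ℕ, l ∈ L. Then the system {e_j : j ∈ ℕ} is complete in ℓ²(L). -/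
theorem lp.hasSum_apply {α ι : Type*} {E : α → Type*} [∀ a, NormedAddCommGroup (E a)]
    {p : ENNReal} [Fact (1 ≤ p)] {g : ι → lp E p} {x : lp E p} (hg : HasSum g x) (a : α) :
    HasSum (fun l => g l a) (x a) :=
  Pi.hasSum.mp (hg.map (lp.coeFnAddMonoidHom E p) lp.uniformContinuous_coe.continuous) a

theorem lp.tsum_apply {α ι : Type*} {E : α → Type*} [∀ a, NormedAddCommGroup (E a)]
    {p : ENNReal} [Fact (1 ≤ p)] {g : ι → lp E p} (hg : Summable g) (a : α) :
    (∑' l, g l) a = ∑' l, g l a :=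
  (lp.hasSum_apply hg.hasSum a).tsum_eq.symm

section Transpose

variable {𝕜 ι κ : Type*} [RCLike 𝕜] (u : ι → lp (fun _ : κ => 𝕜) 2)
  (e : κ → lp (fun _ : ι => 𝕜) 2)

theorem tsum_star_smul_apply_eq_inner (he : ∀ j l, e j l = u l j) (c : lp (fun _ : ι => 𝕜) 2)
    (hc : Summable fun l => star c l • u l) (j : κ) :
    (∑' l, star c l • u l) j = inner 𝕜 c (e j) := by
  rw [lp.tsum_apply hc, lp.inner_eq_tsum]
  refine tsum_congr fun l => ?_
  simp [lp.star_apply, he, mul_comm]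

/-- A vector orthogonal to every column `e j` gives, after conjugation, coefficients whose
combination of the rows `u l` vanishes coordinatewise; ω-independence of the rows kills it. -/
theorem topologicalClosure_span_transpose_eq_top (he : ∀ j l, e j l = u l j)
    (hsummable : ∀ c : lp (fun _ : ι => 𝕜) 2, Summable fun l => c l • u l)
    (hindep : ∀ c : lp (fun _ : ι => 𝕜) 2, HasSum (fun l => c l • u l) 0 → c = 0) :
    (Submodule.span 𝕜 (Set.range e)).topologicalClosure = ⊤ := by
  rw [Submodule.topologicalClosure_eq_top_iff, Submodule.eq_bot_iff]
  intro c hc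
  have hcomb : ∑' l, star c l • u l = 0 := by
    ext j
    rw [tsum_star_smul_apply_eq_inner u e he c (hsummable _) j, ← inner_conj_symm,
      hc (e j) (Submodule.subset_span ⟨j, rfl⟩), map_zero, lp.coeFn_zero, Pi.zero_apply]
  simpa using congrArg star (hindep (star c) (hcomb ▸ (hsummable (star c)).hasSum))

end Transpose

theorem column_system_is_complete_general
    (K : Type)
    (u : ℕ ⊕ K → lp (fun _ : ℕ => ℂ) 2)
    (hindep : ∀ c : lp (fun _ : ℕ ⊕ K => ℂ) 2,
      HasSum (fun l : ℕ ⊕ K => c l • u l) 0 → c = 0)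
    (hsummable : ∀ c : lp (fun _ : ℕ ⊕ K => ℂ) 2,
      Summable (fun l : ℕ ⊕ K => c l • u l))
    (e : ℕ → lp (fun _ : ℕ ⊕ K => ℂ) 2)
    (he : ∀ (j : ℕ) (l : ℕ ⊕ K), e j l = u l j) :
    (Submodule.span ℂ (Set.range e)).topologicalClosure = ⊤ :=
  topologicalClosure_span_transpose_eq_top u e he hsummable hindep

/-- **Completeness of the column system associated to an ω-independent row system.** Let
`{f j} ⊆ ℓ²(ℕ)` have transpose rows `v i (j) = f j (i)`, each belonging to `ℓ²(ℕ)` (formalized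
by the data `v : ℕ → ℓ²(ℕ)` with the prescribed entries). Let `L = ℕ ⊔ K` be a countable index
type, let `{w k}_{k ∈ K} ⊆ ℓ²(ℕ)`, and suppose the combined row family `u : L → ℓ²(ℕ)` (with
`u (inl i) = v i` and `u (inr k) = w k`) is ω-linearly independent for `ℓ²(L)` and satisfies
the upper Riesz inequality with some constant `B > 0`. If `e j ∈ ℓ²(L)` are the columns,
`e j (l) = u l (j)`, then the system `{e j}` is complete in `ℓ²(L)`. -/
theorem column_system_is_complete
    (A : ℝ) (hA : 0 < A) (B : ℝ) (hB : 0 < B)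
    (f : ℕ → lp (fun _ : ℕ => ℂ) 2) (v : ℕ → lp (fun _ : ℕ => ℂ) 2)
    (hv : ∀ i j : ℕ, v i j = f j i)
    (K : Type) [Countable K] (w : K → lp (fun _ : ℕ => ℂ) 2)
    (u : ℕ ⊕ K → lp (fun _ : ℕ => ℂ) 2)
    (huv : ∀ i : ℕ, u (Sum.inl i) = v i) (huw : ∀ k : K, u (Sum.inr k) = w k)
    (hindep : ∀ c : lp (fun _ : ℕ ⊕ K => ℂ) 2,
      HasSum (fun l : ℕ ⊕ K => c l • u l) 0 → c = 0)
    (hsummable : ∀ c : lp (fun _ : ℕ ⊕ K => ℂ) 2,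
      Summable (fun l : ℕ ⊕ K => c l • u l))
    (hriesz : ∀ c : lp (fun _ : ℕ ⊕ K => ℂ) 2,
      ‖∑' l : ℕ ⊕ K, c l • u l‖ ^ 2 ≤ B * ‖c‖ ^ 2)
    (e : ℕ → lp (fun _ : ℕ ⊕ K => ℂ) 2)
    (he : ∀ (j : ℕ) (l : ℕ ⊕ K), e j l = u l j) :
    (Submodule.span ℂ (Set.range e)).topologicalClosure = ⊤ :=
  column_system_is_complete_general K u hindep hsummable e he
end
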